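/- Let (Y,T) be a continuous flow where the space Y is connected, let t be a nonzero real number and let q be a positive integer. If the time-(t/q) map T^{t/q} is minimal, then the time-t map T^t is minimal. -/

import Mathlib

open Set

/-- A continuous flow: a jointly continuous action of `ℝ` on `Y` with `T 0 = id` and
`T (s + t) = T s ∘ T t`. -/
def IsFlow {Y : Type*} [TopologicalSpace Y] (T : ℝ → Y → Y) : Prop :=
  Continuous (fun p : Y × ℝ => T p.2 p.1) ∧ (∀ y, T 0 y = y) ∧
    ∀ s t : ℝ, ∀ y, T (s + t) y = T s (T t y)

/-- A set is invariant under the flow if `T t '' M = M` for all `t`. -/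
def FlowInvariant {Y : Type*} (T : ℝ → Y → Y) (M : Set Y) : Prop :=
  ∀ t : ℝ, T t '' M = M

/-- The flow is minimal if the only closed invariant subsets are `∅` and `univ`. -/
def IsMinimalFlow {Y : Type*} [TopologicalSpace Y] (T : ℝ → Y → Y) : Prop :=
  ∀ M : Set Y, IsClosed M → FlowInvariant T M → M = ∅ ∨ M = univ

/-- A self-map is minimal if the only closed subsets `M` with `g '' M = M` are `∅` and `univ`. -/
def IsMinimalMap {Y : Type*} [TopologicalSpace Y] (g : Y → Y) : Prop :=
  ∀ M : Set Y, IsClosed M → g '' M = M → M = ∅ ∨ M = univ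

/-- `χ : Y → ℂ` is a (unit-circle valued) eigenvector of the flow `T` with eigenvalue `l ∈ ℝ`
if it is continuous, of modulus one, and `χ (T t y) = e^{2πi l t} * χ y`. -/
def IsEigenvector {Y : Type*} [TopologicalSpace Y] (T : ℝ → Y → Y) (l : ℝ) (χ : Y → ℂ) : Prop :=
  Continuous χ ∧ (∀ y, ‖χ y‖ = 1) ∧
    ∀ (y : Y) (t : ℝ), χ (T t y) = Complex.exp (2 * Real.pi * Complex.I * l * t) * χ y

/-- The set `Λ(Y, T)` of eigenvalues of a flow. -/
def Eigenvalues {Y : Type*} [TopologicalSpace Y] (T : ℝ → Y → Y) : Set ℝ :=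
  {l : ℝ | ∃ χ : Y → ℂ, IsEigenvector T l χ}

/-!
Put `g = T^{t/q}`, so that `T^t = g^q`. A nonempty closed `T^t`-invariant set contains a minimal
one `m` (Zorn). Since `g` commutes with `T^t`, every translate `g^i m` is again `T^t`-minimal, so two
translates are equal or disjoint, and as `g^q m = m` there are only finitely many. Their union is
closed and `g`-invariant, hence all of `Y`; so the complement of `m` is a finite union of closed
translates, `m` is clopen, and connectedness gives `m = Y`.
-/

section Iterate

variable {α : Type*} {g : α → α} {m : Set α} {q : ℕ}

theorem periodic_image_iterate (hm : g^[q] '' m = m) : Function.Periodic (fun i => g^[i] '' m) q :=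
  fun i => by simp only [Function.iterate_add, image_comp, hm]

theorem finite_range_image_iterate (hm : g^[q] '' m = m) (hq : 0 < q) :
    (range fun i => g^[i] '' m).Finite :=
  ((finite_Iio q).image fun i => g^[i] '' m).subset <| range_subset_iff.2 fun i =>
    ⟨i % q, Nat.mod_lt i hq, (periodic_image_iterate hm).map_mod_nat i⟩

theorem image_iUnion_image_iterate (hm : g^[q] '' m = m) (hq : 0 < q) :
    g '' ⋃ i, g^[i] '' m = ⋃ i, g^[i] '' m := by
  rw [image_iUnion]
  refine Subset.antisymm (iUnion_mono' fun i => ⟨i + 1, ?_⟩) (iUnion_subset fun i => ?_)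
  · rw [Function.iterate_succ', image_comp]
  · have hi : i + q = i + q - 1 + 1 := by omega
    calc g^[i] '' m = g^[i + q - 1 + 1] '' m := hi ▸ (periodic_image_iterate hm i).symm
      _ ⊆ _ := subset_iUnion_of_subset (i + q - 1) (by rw [Function.iterate_succ', image_comp])

end Iterate

theorem Homeomorph.coe_pow {Y : Type*} [TopologicalSpace Y] (g : Y ≃ₜ Y) (n : ℕ) :
    ⇑(g ^ n) = g^[n] := by
  induction n with
  | zero => rfl
  | succ n ih => rw [pow_succ, Function.iterate_succ, ← ih]; rfl

section MinimalSet

variable {Y : Type*} [TopologicalSpace Y]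

def IsNonemptyClosedInvariant (f : Y → Y) (N : Set Y) : Prop :=
  N.Nonempty ∧ IsClosed N ∧ f '' N = N

def IsMinimalSet (f : Y → Y) : Set Y → Prop :=
  Minimal (IsNonemptyClosedInvariant f)

theorem exists_isMinimalSet_subset [CompactSpace Y] {f : Y → Y} (hf : f.Injective) {M : Set Y}
    (hM : IsNonemptyClosedInvariant f M) : ∃ m ⊆ M, IsMinimalSet f m := by
  refine zorn_superset_nonempty _ (fun c hc hchain hcne => ?_) M hM
  have := hcne.to_subtype
  refine ⟨⋂₀ c, ⟨?_, isClosed_sInter fun N hN => (hc hN).2.1, ?_⟩,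
    fun N hN => sInter_subset_of_mem hN⟩
  · refine IsCompact.nonempty_sInter_of_directed_nonempty_isCompact_isClosed
      (fun a ha b hb => ?_) (fun N hN => (hc hN).1) (fun N hN => (hc hN).2.1.isCompact)
      fun N hN => (hc hN).2.1
    exact (hchain.total ha hb).elim (fun hab => ⟨a, ha, le_rfl, hab⟩)
      fun hba => ⟨b, hb, hba, le_rfl⟩
  · rw [sInter_eq_iInter, hf.injOn.image_iInter_eq]
    exact iInter_congr fun N => (hc N.2).2.2

theorem IsMinimalSet.eq_or_disjoint {f : Y → Y} (hf : f.Injective) {m m' : Set Y}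
    (hm : IsMinimalSet f m) (hm' : IsMinimalSet f m') : m = m' ∨ Disjoint m m' := by
  rcases (m ∩ m').eq_empty_or_nonempty with h | h
  · exact .inr (disjoint_iff_inter_eq_empty.2 h)
  have hinter : IsNonemptyClosedInvariant f (m ∩ m') :=
    ⟨h, hm.prop.2.1.inter hm'.prop.2.1, by rw [image_inter hf, hm.prop.2.2, hm'.prop.2.2]⟩
  exact .inl ((hm.eq_of_superset hinter inter_subset_left).trans
    (hm'.eq_of_superset hinter inter_subset_right).symm)

theorem IsNonemptyClosedInvariant.image {f h : Y ≃ₜ Y} (hhf : Commute h f) {N : Set Y}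
    (hN : IsNonemptyClosedInvariant f N) : IsNonemptyClosedInvariant f (h '' N) := by
  obtain ⟨hne, hcl, hfN⟩ := hN
  refine ⟨hne.image h, h.isClosedMap N hcl, ?_⟩
  rw [image_comm (f := f) (g := h) (f' := f) (g' := h)
    fun y => (DFunLike.congr_fun hhf.eq y).symm, hfN]

theorem IsMinimalSet.image {f h : Y ≃ₜ Y} (hhf : Commute h f) {m : Set Y}
    (hm : IsMinimalSet f m) : IsMinimalSet f (h '' m) := by
  refine ⟨hm.prop.image hhf, fun N hN hNm => ?_⟩
  have hNm' : h.symm '' N ⊆ m := by rwa [image_subset_iff, h.preimage_symm]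
  calc h '' m ⊆ h '' (h.symm '' N) := image_mono (hm.2 (hN.image hhf.inv_left) hNm')
    _ = N := h.toEquiv.image_symm_image N

end MinimalSet

theorem isOpen_of_sUnion_eq_univ_of_eq_or_disjoint {Y : Type*} [TopologicalSpace Y]
    {𝒮 : Set (Set Y)} {m : Set Y}
    (hfin : 𝒮.Finite) (hcl : ∀ s ∈ 𝒮, IsClosed s) (hcover : ⋃₀ 𝒮 = univ)
    (hm : ∀ s ∈ 𝒮, s = m ∨ Disjoint s m) : IsOpen m := by
  have hcompl : mᶜ = ⋃ s ∈ {s ∈ 𝒮 | Disjoint s m}, s := by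
    refine Subset.antisymm (fun x hx => ?_) (iUnion₂_subset fun s hs => hs.2.subset_compl_right)
    obtain ⟨s, hs, hxs⟩ := mem_sUnion.1 (hcover ▸ mem_univ x)
    refine mem_biUnion ⟨hs, (hm s hs).resolve_left ?_⟩ hxs
    rintro rfl
    exact hx hxs
  rw [← isClosed_compl_iff, hcompl]
  exact (hfin.subset (sep_subset _ _)).isClosed_biUnion fun s hs => hcl s hs.1

theorem Homeomorph.isMinimalMap_iterate {Y : Type*} [TopologicalSpace Y] [CompactSpace Y]
    [ConnectedSpace Y] {g : Y ≃ₜ Y} (hg : IsMinimalMap g) {q : ℕ} (hq : 0 < q) :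
    IsMinimalMap (⇑g)^[q] := by
  intro M hM hgM
  rcases M.eq_empty_or_nonempty with hM₀ | hne
  · exact .inl hM₀
  rw [← g.coe_pow] at hgM
  obtain ⟨m, hmM, hm⟩ := exists_isMinimalSet_subset (g ^ q).injective ⟨hne, hM, hgM⟩
  have hperiod : g^[q] '' m = m := by rw [← g.coe_pow]; exact hm.prop.2.2
  have htranslate (i : ℕ) : IsMinimalSet ⇑(g ^ q) (g^[i] '' m) := by
    rw [← g.coe_pow]; exact hm.image (Commute.pow_pow_self g i q)
  have hfin : (range fun i => g^[i] '' m).Finite := finite_range_image_iterate hperiod hq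
  have hclosed : ∀ s ∈ range fun i => g^[i] '' m, IsClosed s :=
    forall_mem_range.2 fun i => (htranslate i).prop.2.1
  have hcover : ⋃ i, g^[i] '' m = univ := by
    refine (hg _ ?_ (image_iUnion_image_iterate hperiod hq)).resolve_left ?_
    · rw [← sUnion_range, sUnion_eq_biUnion]
      exact hfin.isClosed_biUnion hclosed
    · exact (hm.prop.1.mono (subset_iUnion_of_subset 0 (image_id m).ge)).ne_empty
  have hopen : IsOpen m :=
    isOpen_of_sUnion_eq_univ_of_eq_or_disjoint hfin hclosed (by rwa [sUnion_range])
      (forall_mem_range.2 fun i => (htranslate i).eq_or_disjoint (g ^ q).injective hm)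
  exact .inr (eq_univ_of_univ_subset (IsClopen.eq_univ ⟨hm.prop.2.1, hopen⟩ hm.prop.1 ▸ hmM))

namespace IsFlow

variable {Y : Type*} [TopologicalSpace Y] {T : ℝ → Y → Y}

theorem continuous_apply (hT : IsFlow T) (s : ℝ) : Continuous (T s) :=
  hT.1.comp (continuous_id.prodMk continuous_const)

theorem apply_neg_apply (hT : IsFlow T) (s : ℝ) (y : Y) : T (-s) (T s y) = y := by
  rw [← hT.2.2, neg_add_cancel, hT.2.1]

def homeomorph (hT : IsFlow T) (s : ℝ) : Y ≃ₜ Y where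
  toFun := T s
  invFun := T (-s)
  left_inv := hT.apply_neg_apply s
  right_inv y := by simpa using hT.apply_neg_apply (-s) y
  continuous_toFun := hT.continuous_apply s
  continuous_invFun := hT.continuous_apply (-s)

theorem iterate (hT : IsFlow T) (s : ℝ) (n : ℕ) : (T s)^[n] = T (n * s) := by
  induction n with
  | zero => ext y; simp [hT.2.1]
  | succ n ih =>
    ext y
    rw [Function.iterate_succ_apply', ih, ← hT.2.2]
    congr 1
    push_cast
    ring

end IsFlow

theorem minimal_of_minimal_div_general {Y : Type*} [MetricSpace Y] [CompactSpace Y]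
    [ConnectedSpace Y] (T : ℝ → Y → Y) (hT : IsFlow T) (t : ℝ)
    (q : ℕ) (hq : 0 < q) (h : IsMinimalMap (T (t / (q : ℝ)))) :
    IsMinimalMap (T t) := by
  have hiter : (T (t / q))^[q] = T t := by
    rw [hT.iterate, mul_div_cancel₀ t (Nat.cast_ne_zero.2 hq.ne')]
  exact hiter ▸ (hT.homeomorph (t / q)).isMinimalMap_iterate h hq

/-- Let `(Y, T)` be a continuous flow with `Y` connected, `t ≠ 0` a real number
and `q` a positive integer. If the time-`t/q` map is minimal then the time-`t` map is minimal. -/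
theorem minimal_of_minimal_div {Y : Type*} [MetricSpace Y] [CompactSpace Y]
    [ConnectedSpace Y] (T : ℝ → Y → Y) (hT : IsFlow T) (t : ℝ) (ht : t ≠ 0)
    (q : ℕ) (hq : 0 < q) (h : IsMinimalMap (T (t / (q : ℝ)))) :
    IsMinimalMap (T t) :=
  minimal_of_minimal_div_general T hT t q hq h
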